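/- arXiv:1902.04136 — 2 statements merged into one kernel-verified Lean document; each statement's English description precedes it below -/
import Mathlib

section
/- For every positive integer n, the convex hull Δ ⊆ ℝⁿ of the even vertices of the hypercube [0,1]ⁿ equals the set of points x ∈ ℝⁿ satisfying 0 ≤ x_i ≤ 1 for all i ∈ {1,…,n} and H_I(x) ≥ 1 for every subset I ⊆ {1,…,n} of odd cardinality. -/
open Finset

/-- Indicator vector of a subset `I ⊆ {1,…,n}` in `ℝⁿ`. -/
def xi {n : ℕ} (I : Finset (Fin n)) : Fin n → ℝ := fun i => if i ∈ I then 1 else 0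

/-- The affine function `H_I(x) = ∑_{j∉I} x_j + ∑_{i∈I} (1 − x_i)`. -/
def Hfun {n : ℕ} (I : Finset (Fin n)) (x : Fin n → ℝ) : ℝ :=
  ∑ j ∈ Iᶜ, x j + ∑ i ∈ I, (1 - x i)

/-- The demi-hypercube: convex hull of the even vertices of `[0,1]ⁿ`. -/
def DemiCube (n : ℕ) : Set (Fin n → ℝ) :=
  convexHull ℝ {x : Fin n → ℝ | ∃ I : Finset (Fin n), Even I.card ∧ x = xi I}

/-!
The inequalities cut out a compact convex set `P` containing every even vertex, so by the
Krein–Milman theorem it suffices to show that every extreme point of `P` is an even vertex.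
A point `ξ_S` of `P` has `S` even, because `H_S(ξ_S) = 0`. If instead `0 < x_m < 1`, round `x`
at `1/2` to an even vertex `ξ_I`, using the coordinate `m` to fix the parity. As
`H_K(ξ_I) = |K ∆ I|`, each odd constraint either has `|K ∆ I| = 1`, and then holds along the
whole ray from `ξ_I` through `x`, or is strict at `x`. Hence `x` lies in the interior of a
segment in `P` ending at `ξ_I` and is not extreme.
-/

namespace Finset

variable {α : Type*} [DecidableEq α]

lemma card_symmDiff_add_two_mul_card_inter (s t : Finset α) :
    #(symmDiff s t) + 2 * #(s ∩ t) = #s + #t := by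
  rw [symmDiff_eq_sup_sdiff_inf, sup_eq_union, inf_eq_inter,
    card_sdiff_of_subset inter_subset_union, ← card_union_add_card_inter]
  have := card_le_card (inter_subset_union (s := s) (t := t))
  omega

lemma odd_card_symmDiff {s t : Finset α} (hs : Odd #s) (ht : Even #t) :
    Odd #(symmDiff s t) := by
  have := card_symmDiff_add_two_mul_card_inter s t
  rw [Nat.odd_iff] at hs ⊢
  rw [Nat.even_iff] at ht
  omega

lemma exists_even_card_erase_eq (s : Finset α) (a : α) :
    ∃ t : Finset α, Even #t ∧ t.erase a = s.erase a := by
  by_cases h : Even #(s.erase a)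
  · exact ⟨s.erase a, h, erase_idem⟩
  · refine ⟨insert a (s.erase a), ?_, by simp⟩
    rw [card_insert_of_notMem (notMem_erase a s), Nat.even_add_one]
    exact h

end Finset

section Hfun

variable {n : ℕ}

lemma Hfun_eq_sum_ite (K : Finset (Fin n)) (x : Fin n → ℝ) :
    Hfun K x = ∑ l, if l ∈ K then 1 - x l else x l := by
  rw [← sum_add_sum_compl K, Hfun, add_comm]
  congr 1 <;> refine sum_congr rfl fun l hl => ?_
  · simp [hl]
  · simp [mem_compl.mp hl]

lemma Hfun_add_smul (K : Finset (Fin n)) (x y : Fin n → ℝ) {a b : ℝ} (hab : a + b = 1) :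
    Hfun K (a • x + b • y) = a * Hfun K x + b * Hfun K y := by
  obtain rfl : b = 1 - a := by linarith
  simp only [Hfun_eq_sum_ite, mul_sum, ← sum_add_distrib]
  refine sum_congr rfl fun l _ => ?_
  split_ifs <;> simp only [Pi.add_apply, Pi.smul_apply, smul_eq_mul]
  ring

lemma Hfun_xi (K I : Finset (Fin n)) : Hfun K (xi I) = #(symmDiff K I) := by
  calc Hfun K (xi I) = ∑ l, if l ∈ symmDiff K I then (1 : ℝ) else 0 := by
        rw [Hfun_eq_sum_ite]
        refine sum_congr rfl fun l _ => ?_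
        by_cases hK : l ∈ K <;> by_cases hI : l ∈ I <;> simp [xi, mem_symmDiff, hK, hI]
    _ = #(symmDiff K I) := by simp

lemma continuous_Hfun (K : Finset (Fin n)) : Continuous (Hfun K) := by
  unfold Hfun
  fun_prop

end Hfun

def parityPolytope (n : ℕ) : Set (Fin n → ℝ) :=
  {x | (∀ i, 0 ≤ x i ∧ x i ≤ 1) ∧ ∀ I : Finset (Fin n), Odd #I → 1 ≤ Hfun I x}

section parityPolytope

variable {n : ℕ}

lemma convex_parityPolytope : Convex ℝ (parityPolytope n) := by
  intro x ⟨hx01, hxH⟩ y ⟨hy01, hyH⟩ a b ha hb hab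
  refine ⟨fun i => ?_, fun K hK => ?_⟩
  · simp only [Pi.add_apply, Pi.smul_apply, smul_eq_mul]
    obtain ⟨hx0, hx1⟩ := hx01 i
    obtain ⟨hy0, hy1⟩ := hy01 i
    constructor <;> nlinarith
  · rw [Hfun_add_smul K x y hab]
    nlinarith [hxH K hK, hyH K hK]

lemma isCompact_parityPolytope : IsCompact (parityPolytope n) := by
  have hclosed : IsClosed (parityPolytope n) := by
    simp only [parityPolytope, Set.ofPred_and, Set.ofPred_forall]
    exact .inter
      (isClosed_iInter fun i => .inter (isClosed_le continuous_const (continuous_apply i))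
        (isClosed_le (continuous_apply i) continuous_const))
      (isClosed_iInter fun K => isClosed_iInter fun _ =>
        isClosed_le continuous_const (continuous_Hfun K))
  refine (isCompact_Icc (a := 0) (b := 1)).of_isClosed_subset hclosed fun x hx => ?_
  exact ⟨fun i => (hx.1 i).1, fun i => (hx.1 i).2⟩

lemma xi_mem_parityPolytope {I : Finset (Fin n)} (hI : Even #I) : xi I ∈ parityPolytope n := by
  refine ⟨fun i => ?_, fun K hK => ?_⟩
  · by_cases h : i ∈ I <;> simp [xi, h]
  · rw [Hfun_xi]
    exact_mod_cast (odd_card_symmDiff hK hI).pos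

lemma demiCube_subset_parityPolytope : DemiCube n ⊆ parityPolytope n :=
  convexHull_min (by rintro _ ⟨I, hI, rfl⟩; exact xi_mem_parityPolytope hI) convex_parityPolytope

end parityPolytope

section extremePoints

variable {n : ℕ}

lemma exists_even_rounding {x : Fin n → ℝ} (hx : ∀ i, 0 ≤ x i ∧ x i ≤ 1) {m : Fin n}
    (hm0 : 0 < x m) (hm1 : x m < 1) :
    ∃ I : Finset (Fin n), Even #I ∧ (∀ l ∈ I, 0 < x l) ∧ (∀ l ∉ I, x l < 1) ∧
      ∀ K : Finset (Fin n), Odd #K → #(symmDiff K I) = 1 ∨ 1 < Hfun K x := by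
  obtain ⟨I, hIeven, hIm⟩ := exists_even_card_erase_eq (univ.filter fun l => 1 / 2 < x l) m
  have hI : ∀ l ≠ m, (l ∈ I ↔ 1 / 2 < x l) := fun l hl => by
    simpa [hl] using Finset.ext_iff.mp hIm l
  refine ⟨I, hIeven, fun l hl => ?_, fun l hl => ?_, fun K hK => ?_⟩
  · rcases eq_or_ne l m with rfl | hlm
    · exact hm0
    · linarith [(hI l hlm).1 hl]
  · rcases eq_or_ne l m with rfl | hlm
    · exact hm1
    · linarith [not_lt.1 (mt (hI l hlm).2 hl)]
  refine or_iff_not_imp_left.2 fun hD1 => ?_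
  set D := symmDiff K I
  have hD : 2 ≤ #(D.erase m) := by
    have := pred_card_le_card_erase (s := D) (a := m)
    obtain ⟨k, hk⟩ : Odd #D := odd_card_symmDiff hK hIeven
    omega
  set term : Fin n → ℝ := fun l => if l ∈ K then 1 - x l else x l
  have hterm_nonneg : ∀ l, 0 ≤ term l := fun l => by
    by_cases hl : l ∈ K <;> simp [term, hl, hx l]
  have hterm_m : 0 < term m := by
    by_cases hm : m ∈ K <;> simp [term, hm, hm0, hm1]
  have hterm_half : ∀ l ∈ D.erase m, 1 / 2 ≤ term l := fun l hl => by
    obtain ⟨hlm, hlD⟩ := mem_erase.1 hl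
    rcases mem_symmDiff.1 hlD with ⟨hlK, hlI⟩ | ⟨hlI, hlK⟩
    · simp only [term, hlK, if_true]
      linarith [not_lt.1 (mt (hI l hlm).2 hlI)]
    · simp only [term, hlK, if_false]
      linarith [(hI l hlm).1 hlI]
  -- the coordinates of `K ∆ I` other than `m` each contribute at least `1/2`, and `m` a bit more
  calc 1 < term m + #(D.erase m) • (1 / 2 : ℝ) := by
        rw [nsmul_eq_mul]
        have : (2 : ℝ) ≤ #(D.erase m) := by exact_mod_cast hD
        linarith
    _ ≤ term m + ∑ l ∈ D.erase m, term l := by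
        gcongr
        exact card_nsmul_le_sum _ _ _ hterm_half
    _ = ∑ l ∈ insert m (D.erase m), term l := (sum_insert (notMem_erase m D)).symm
    _ ≤ ∑ l, term l := sum_le_sum_of_subset_of_nonneg (subset_univ _) fun l _ _ => hterm_nonneg l
    _ = Hfun K x := (Hfun_eq_sum_ite K x).symm

open Filter Topology in
lemma eventually_mem_parityPolytope {x : Fin n → ℝ} (hx : x ∈ parityPolytope n)
    {I : Finset (Fin n)} (hpos : ∀ l ∈ I, 0 < x l) (hlt : ∀ l ∉ I, x l < 1)
    (hcut : ∀ K : Finset (Fin n), Odd #K → #(symmDiff K I) = 1 ∨ 1 < Hfun K x) :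
    ∀ᶠ t in 𝓝[>] (0 : ℝ), (1 + t) • x + (-t) • xi I ∈ parityPolytope n := by
  have hnonneg : ∀ᶠ t in 𝓝[>] (0 : ℝ), 0 ≤ t :=
    eventually_nhdsWithin_of_forall fun _ ht => le_of_lt ht
  have above {f : ℝ → ℝ} (hf : Continuous f) {c : ℝ} (hc : c < f 0) : ∀ᶠ t in 𝓝[>] 0, c < f t :=
    ((hf.tendsto 0).eventually_const_lt hc).filter_mono nhdsWithin_le_nhds
  have below {f : ℝ → ℝ} (hf : Continuous f) {c : ℝ} (hc : f 0 < c) : ∀ᶠ t in 𝓝[>] 0, f t < c :=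
    ((hf.tendsto 0).eventually_lt_const hc).filter_mono nhdsWithin_le_nhds
  refine (eventually_all.2 fun l => ?_).and (eventually_all.2 fun K => ?_)
  · obtain ⟨hl0, hl1⟩ := hx.1 l
    simp only [Pi.add_apply, Pi.smul_apply, smul_eq_mul, xi]
    by_cases hl : l ∈ I
    · filter_upwards [hnonneg, above (f := fun t => (1 + t) * x l + -t * 1) (by fun_prop)
        (c := 0) (by simpa using hpos l hl)] with t ht hyt
      simp only [hl, if_true]
      constructor <;> nlinarith
    · filter_upwards [hnonneg, below (f := fun t => (1 + t) * x l + -t * 0) (by fun_prop)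
        (c := 1) (by simpa using hlt l hl)] with t ht hyt
      simp only [hl, if_false]
      constructor <;> nlinarith
  · by_cases hK : Odd #K
    · have hH := hx.2 K hK
      have hy (t : ℝ) : Hfun K ((1 + t) • x + (-t) • xi I) =
          (1 + t) * Hfun K x + -t * #(symmDiff K I) := by
        rw [Hfun_add_smul K x (xi I) (by ring), Hfun_xi]
      simp only [hy]
      rcases hcut K hK with h1 | h1
      · filter_upwards [hnonneg] with t ht _
        rw [h1]
        push_cast
        nlinarith
      · filter_upwards [above (f := fun t => (1 + t) * Hfun K x + -t * #(symmDiff K I))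
          (by fun_prop) (c := 1) (by simpa using h1)] with t ht _
        exact ht.le
    · exact Eventually.of_forall fun t h => absurd h hK

lemma exists_even_eq_xi_of_mem_parityPolytope {x : Fin n → ℝ} (hx : x ∈ parityPolytope n)
    (hint : ∀ l, x l = 0 ∨ x l = 1) : ∃ I : Finset (Fin n), Even #I ∧ x = xi I := by
  set S := univ.filter fun l => x l = 1
  have hxS : x = xi S := funext fun l => by rcases hint l with h | h <;> simp [S, xi, h]
  refine ⟨S, Nat.not_odd_iff_even.1 fun hS => ?_, hxS⟩
  have := hx.2 S hS
  rw [hxS, Hfun_xi, symmDiff_self, bot_eq_empty, card_empty, Nat.cast_zero] at this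
  exact absurd this (by norm_num)

lemma extremePoints_parityPolytope_subset :
    (parityPolytope n).extremePoints ℝ ⊆ {x | ∃ I : Finset (Fin n), Even #I ∧ x = xi I} := by
  intro x hx
  obtain ⟨hxP, hext⟩ := mem_extremePoints.1 hx
  by_cases hint : ∀ l, x l = 0 ∨ x l = 1
  · exact exists_even_eq_xi_of_mem_parityPolytope hxP hint
  push Not at hint
  obtain ⟨m, hm0, hm1⟩ := hint
  obtain ⟨I, hIeven, hpos, hlt, hcut⟩ := exists_even_rounding hxP.1
    ((hxP.1 m).1.lt_of_ne' hm0) ((hxP.1 m).2.lt_of_ne hm1)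
  obtain ⟨t, hyP, ht⟩ :=
    ((eventually_mem_parityPolytope hxP hpos hlt hcut).and self_mem_nhdsWithin).exists
  have ht' : (0 : ℝ) < 1 + t := by linarith [show 0 < t from ht]
  have hseg : x ∈ openSegment ℝ (xi I) ((1 + t) • x + (-t) • xi I) := by
    refine ⟨t / (1 + t), 1 / (1 + t), div_pos ht ht', by positivity, by field_simp; ring, ?_⟩
    ext l
    simp only [Pi.add_apply, Pi.smul_apply, smul_eq_mul]
    field_simp
    ring
  have hxm := congr_fun (hext _ (xi_mem_parityPolytope hIeven) _ hyP hseg).1 m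
  by_cases hm : m ∈ I
  · exact (hm1 (by simpa [xi, hm] using hxm.symm)).elim
  · exact (hm0 (by simpa [xi, hm] using hxm.symm)).elim

end extremePoints

theorem stmt_1_general (n : ℕ) :
    DemiCube n =
      {x : Fin n → ℝ | (∀ i, 0 ≤ x i ∧ x i ≤ 1) ∧
        ∀ I : Finset (Fin n), Odd I.card → 1 ≤ Hfun I x} := by
  refine demiCube_subset_parityPolytope.antisymm ?_
  have hvertices : {x | ∃ I : Finset (Fin n), Even #I ∧ x = xi I}.Finite :=
    (Set.finite_range xi).subset fun x ⟨I, _, hx⟩ => ⟨I, hx.symm⟩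
  calc parityPolytope n
      = closure (convexHull ℝ ((parityPolytope n).extremePoints ℝ)) :=
        (closure_convexHull_extremePoints isCompact_parityPolytope convex_parityPolytope).symm
    _ ⊆ closure (DemiCube n) :=
        closure_mono (convexHull_mono extremePoints_parityPolytope_subset)
    _ = DemiCube n := (hvertices.isClosed_convexHull (𝕜 := ℝ)).closure_eq

theorem stmt_1 (n : ℕ) (hn : 0 < n) :
    DemiCube n =
      {x : Fin n → ℝ | (∀ i, 0 ≤ x i ∧ x i ≤ 1) ∧
        ∀ I : Finset (Fin n), Odd I.card → 1 ≤ Hfun I x} :=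
  stmt_1_general n
end

section
/- Let n ≥ 3 and let I ⊆ {1,…,n} be a subset of even cardinality. Then the affine span over ℝ of the set {ξ_J : J ⊆ {1,…,n}, |J| even, |I Δ J| = 2} (which is precisely the set of vertices of the demi-hypercube Δ adjacent to the vertex ξ_I) equals the affine hyperplane {x ∈ ℝⁿ : H_I(x) = 2}. -/
open Finset

/-- Sign vector of `I`: `-1` on `I`, `1` off `I`. -/
def sg {n : ℕ} (I : Finset (Fin n)) (i : Fin n) : ℝ := if i ∈ I then -1 else 1

lemma sg_sq {n : ℕ} (I : Finset (Fin n)) (i : Fin n) : sg I i * sg I i = 1 := by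
  unfold sg; split <;> norm_num

lemma hfun_eq {n : ℕ} (I : Finset (Fin n)) (x : Fin n → ℝ) :
    Hfun I x = I.card + ∑ i, sg I i * x i := by
  have h : ∑ i, sg I i * x i = ∑ i ∈ I, sg I i * x i + ∑ i ∈ Iᶜ, sg I i * x i :=
    (Finset.sum_add_sum_compl I _).symm
  have h1 : ∑ i ∈ I, sg I i * x i = ∑ i ∈ I, (- x i) := by
    apply Finset.sum_congr rfl; intro i hi; simp [sg, hi]
  have h2 : ∑ i ∈ Iᶜ, sg I i * x i = ∑ i ∈ Iᶜ, x i := by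
    apply Finset.sum_congr rfl; intro i hi; simp [sg, Finset.mem_compl.mp hi]
  rw [h, h1, h2]
  simp [Hfun, Finset.sum_sub_distrib]
  ring

lemma card_symmDiff' {n : ℕ} (I J : Finset (Fin n)) :
    (symmDiff I J).card = (I \ J).card + (J \ I).card := by
  rw [symmDiff_def]
  exact Finset.card_union_of_disjoint (disjoint_sdiff_sdiff)

lemma even_symmDiff {n : ℕ} {I J : Finset (Fin n)} (hI : Even I.card) (hJ : Even J.card) :
    Even (symmDiff I J).card := by
  have h1 := Finset.card_sdiff_add_card_inter I J
  have h2 := Finset.card_sdiff_add_card_inter J I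
  have h3 := card_symmDiff' I J
  rw [Finset.inter_comm] at h2
  rw [Nat.even_iff] at *
  omega

lemma hfun_xi {n : ℕ} (I J : Finset (Fin n)) :
    Hfun I (xi J) = ((symmDiff I J).card : ℝ) := by
  have h1 : ∑ j ∈ Iᶜ, xi J j = ((J \ I).card : ℝ) := by
    unfold xi
    rw [Finset.sum_boole]
    congr 1
    rw [Finset.filter_mem_eq_inter, Finset.inter_comm, ← Finset.sdiff_eq_inter_compl]
  have h2 : ∑ i ∈ I, (1 - xi J i) = ((I \ J).card : ℝ) := by
    unfold xi
    have : ∀ i, (1 : ℝ) - (if i ∈ J then 1 else 0) = if i ∉ J then 1 else 0 := by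
      intro i; by_cases h : i ∈ J <;> simp [h]
    simp_rw [this]
    rw [Finset.sum_boole]
    congr 1
    rw [Finset.filter_not, Finset.filter_mem_eq_inter, Finset.sdiff_inter_self_left]
  rw [Hfun, h1, h2, card_symmDiff']
  push_cast; ring

lemma xi_sd_pair {n : ℕ} (I : Finset (Fin n)) {i j : Fin n} (hij : i ≠ j) (k : Fin n) :
    xi (symmDiff I {i, j}) k
      = xi I k + (if k = i then sg I i else 0) + (if k = j then sg I j else 0) := by
  by_cases hki : k = i <;> by_cases hkj : k = j <;> by_cases hk : k ∈ I <;>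
    simp_all [xi, sg, Finset.mem_symmDiff]

lemma hfun_comb {n : ℕ} (I : Finset (Fin n)) (c : ℝ) (x y z : Fin n → ℝ) :
    Hfun I (c • (x - y) + z) = c * (Hfun I x - Hfun I y) + Hfun I z := by
  simp only [hfun_eq, Pi.add_apply, Pi.smul_apply, Pi.sub_apply, smul_eq_mul]
  have : ∀ i, sg I i * (c * (x i - y i) + z i)
      = c * (sg I i * x i) - c * (sg I i * y i) + sg I i * z i := fun i => by ring
  simp_rw [this, Finset.sum_add_distrib, Finset.sum_sub_distrib, ← Finset.mul_sum]
  ring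

theorem stmt_3 (n : ℕ) (hn : 3 ≤ n) (I : Finset (Fin n)) (hI : Even I.card) :
    (affineSpan ℝ {x : Fin n → ℝ |
        ∃ J : Finset (Fin n), Even J.card ∧ (symmDiff I J).card = 2 ∧ x = xi J} :
      Set (Fin n → ℝ)) = {x : Fin n → ℝ | Hfun I x = 2} := by
  set S : Set (Fin n → ℝ) := {x : Fin n → ℝ |
      ∃ J : Finset (Fin n), Even J.card ∧ (symmDiff I J).card = 2 ∧ x = xi J} with hSdef
  -- generators satisfy Hfun = 2
  have hgen : ∀ x ∈ S, Hfun I x = 2 := by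
    rintro x ⟨J, _, h2, rfl⟩
    rw [hfun_xi, h2]; norm_num
  -- membership of pair-flips in S
  have memS : ∀ i j : Fin n, i ≠ j → xi (symmDiff I {i, j}) ∈ S := by
    intro i j hij
    refine ⟨symmDiff I {i, j}, even_symmDiff hI ?_, ?_, rfl⟩
    · rw [Finset.card_pair hij]; exact ⟨1, rfl⟩
    · rw [symmDiff_symmDiff_cancel_left, Finset.card_pair hij]
  -- the hyperplane as an affine subspace
  let Hsub : AffineSubspace ℝ (Fin n → ℝ) :=
    { carrier := {x : Fin n → ℝ | Hfun I x = 2}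
      smul_vsub_vadd_mem' := by
        intro c p1 p2 p3 h1 h2 h3
        show Hfun I (c • (p1 - p2) + p3) = 2
        rw [hfun_comb, h1, h2, h3]; ring }
  have hle : affineSpan ℝ S ≤ Hsub := affineSpan_le.mpr hgen
  apply Set.Subset.antisymm
  · exact fun x hx => hle hx
  · -- converse inclusion
    intro x hx
    have hx2 : Hfun I x = 2 := hx
    have h01 : (⟨0, by omega⟩ : Fin n) ≠ ⟨1, by omega⟩ := by simp [Fin.ext_iff]
    set a : Fin n := ⟨0, by omega⟩ with ha
    set b : Fin n := ⟨1, by omega⟩ with hb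
    set p : Fin n → ℝ := xi (symmDiff I {a, b}) with hpdef
    have hpS : p ∈ S := memS a b h01
    have hp : p ∈ affineSpan ℝ S := subset_affineSpan ℝ S hpS
    set v : Fin n → ℝ := fun k => x k - p k with hvdef
    have hv : ∑ i, sg I i * v i = 0 := by
      have e1 := hfun_eq I x
      have e2 := hfun_eq I p
      rw [hx2] at e1
      rw [hgen p hpS] at e2
      have : ∀ i, sg I i * v i = sg I i * x i - sg I i * p i := fun i =>
        mul_sub _ _ _
      simp_rw [this, Finset.sum_sub_distrib]
      linarith
    set d : Fin n → (Fin n → ℝ) := fun i k =>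
      (if k = i then sg I i else 0) - (if k = a then sg I a else 0) with hddef
    have hd : ∀ i, d i ∈ (affineSpan ℝ S).direction := by
      intro i
      by_cases hia : i = a
      · have : d i = 0 := by
          funext k; simp [hddef, hia]
        rw [this]; exact Submodule.zero_mem _
      · -- pick a third index
        have hne : ({i, a}ᶜ : Finset (Fin n)).Nonempty := by
          rw [← Finset.card_pos, Finset.card_compl]
          have h2 : ({i, a} : Finset (Fin n)).card ≤ 2 := by
            refine le_trans (Finset.card_insert_le _ _) ?_
            simp
          have : Fintype.card (Fin n) = n := Fintype.card_fin n
          omega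
        obtain ⟨kk, hkk⟩ := hne
        rw [Finset.mem_compl, Finset.mem_insert, Finset.mem_singleton] at hkk
        push_neg at hkk
        obtain ⟨hk1, hk2⟩ := hkk
        have h1 : xi (symmDiff I {i, kk}) ∈ affineSpan ℝ S :=
          subset_affineSpan ℝ S (memS i kk (Ne.symm hk1))
        have h2 : xi (symmDiff I {a, kk}) ∈ affineSpan ℝ S :=
          subset_affineSpan ℝ S (memS a kk (Ne.symm hk2))
        have h3 := AffineSubspace.vsub_mem_direction h1 h2
        have h4 : xi (symmDiff I {i, kk}) -ᵥ xi (symmDiff I {a, kk}) = d i := by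
          funext k
          have e1 := xi_sd_pair I (Ne.symm hk1) k
          have e2 := xi_sd_pair I (Ne.symm hk2) k
          show xi (symmDiff I {i, kk}) k - xi (symmDiff I {a, kk}) k = d i k
          rw [e1, e2]; simp only [hddef]; ring
        rwa [h4] at h3
    have hsum : v = ∑ i, (sg I i * v i) • d i := by
      funext k
      rw [Finset.sum_apply]
      have step : ∀ i, ((sg I i * v i) • d i) k
          = (if k = i then (sg I i * v i) * sg I i else 0)
            - (sg I i * v i) * (if k = a then sg I a else 0) := by
        intro i
        simp only [hddef, Pi.smul_apply, smul_eq_mul]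
        split_ifs <;> ring
      simp_rw [step, Finset.sum_sub_distrib, ← Finset.sum_mul, hv]
      rw [Finset.sum_ite_eq]
      have : sg I k * v k * sg I k = v k := by
        calc sg I k * v k * sg I k = (sg I k * sg I k) * v k := by ring
          _ = v k := by rw [sg_sq]; ring
      simp [this]
    have hvmem : v ∈ (affineSpan ℝ S).direction := by
      rw [hsum]
      exact Submodule.sum_mem _ fun i _ => Submodule.smul_mem _ _ (hd i)
    have := AffineSubspace.vadd_mem_of_mem_direction hvmem hp
    have hxvp : v +ᵥ p = x := by
      funext k; simp [hvdef]
    rwa [hxvp] at this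
end
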